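/- Let k be a field, n ∈ ℕ, and 0 ≤ k ≤ n. In k[B_{n+1}], g_{n,k} = shift_{n−k}(ω_{k+1}) · S_{n−k,k}, where shift_i : k[B_m] → k[B_{m+i}] is induced by c_j ↦ c_{j+i}, ω_{m} = (c_{m−1})(c_{m−2}c_{m−1})⋯(c_1⋯c_{m−1}) ∈ B_m (with ω_1 = 1), and S_{n−k,k} = Σ_{π ∈ S_{n−k,k}} c_{π^{-1}} is the sum over (n−k)-shuffles of S_n of the Matsumoto lifts of their inverses. -/

import Mathlib

namespace Stmt

/-- The adjacent transposition `s_{i+1} = (i, i+1)` (0-based) in the symmetric group on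
`Fin m`; indices out of range give the identity. -/
def sNat (m i : ℕ) : Equiv.Perm (Fin m) :=
  if h : i + 1 < m then Equiv.swap ⟨i, by omega⟩ ⟨i + 1, h⟩ else 1

/-- The permutation represented by a word in the adjacent transpositions. -/
def toPerm (m : ℕ) (l : List ℕ) : Equiv.Perm (Fin m) := (l.map (sNat m)).prod

/-- `l` is a reduced decomposition of `π`: it represents `π` and has minimal length among
all words representing `π`. -/
def IsReduced (m : ℕ) (l : List ℕ) (π : Equiv.Perm (Fin m)) : Prop :=
  toPerm m l = π ∧ ∀ l' : List ℕ, toPerm m l' = π → l.length ≤ l'.length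

end Stmt
namespace Stmt

/-- The braid relations on the generators `c_1, …, c_N` (0-based: `Fin N`) of the braid
group `B_{N+1}`. -/
def braidRels (N : ℕ) : Set (FreeGroup (Fin N)) :=
  { r | ∃ i j : Fin N,
      ((i : ℕ) + 1 = (j : ℕ) ∧
        r = FreeGroup.of i * FreeGroup.of j * FreeGroup.of i *
            (FreeGroup.of j * FreeGroup.of i * FreeGroup.of j)⁻¹) ∨
      ((i : ℕ) + 2 ≤ (j : ℕ) ∧
        r = FreeGroup.of i * FreeGroup.of j * (FreeGroup.of j * FreeGroup.of i)⁻¹) }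

/-- The braid group `B_{N+1}`, with `N` generators. -/
abbrev Braid (N : ℕ) := PresentedGroup (braidRels N)

/-- The generator `c_{i+1}` (0-based index `i`) of `B_{N+1}`; out-of-range indices give `1`. -/
def bgen (N : ℕ) (i : ℕ) : Braid N :=
  if h : i < N then PresentedGroup.of (⟨i, h⟩ : Fin N) else 1

/-- The braid group element represented by a word in the generators. -/
def bword (N : ℕ) (l : List ℕ) : Braid N := (l.map (bgen N)).prod

end Stmt
namespace Stmt

/-- Membership in `S̃_{n,k} ⊆ S_{n+1}` (0-based positions): `π(1) < ⋯ < π(n−k)`,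
`π(n−k+1) = n+1`, `π(n−k+2) > ⋯ > π(n+1)`. -/
def StildeP (n k : ℕ) (π : Equiv.Perm (Fin (n + 1))) : Prop :=
  (∀ a b : Fin (n + 1), a < b → (b : ℕ) < n - k → π a < π b) ∧
  π ⟨n - k, by omega⟩ = Fin.last n ∧
  (∀ a b : Fin (n + 1), n - k < (a : ℕ) → a < b → π b < π a)

end Stmt
namespace Stmt

theorem braid_mk_rel {N : ℕ} {a b : FreeGroup (Fin N)}
    (h : a * b⁻¹ ∈ braidRels N) :
    (QuotientGroup.mk a : Braid N) = QuotientGroup.mk b := by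
  have h1 : (QuotientGroup.mk (a * b⁻¹) : Braid N) = 1 :=
    (QuotientGroup.eq_one_iff _).mpr (Subgroup.subset_normalClosure h)
  have h2 : (QuotientGroup.mk a : Braid N) * (QuotientGroup.mk b : Braid N)⁻¹ = 1 := by
    rw [← QuotientGroup.mk_inv, ← QuotientGroup.mk_mul]; exact h1
  exact mul_inv_eq_one.mp h2

theorem braid_braid {N : ℕ} {i j : Fin N} (hij : (i : ℕ) + 1 = (j : ℕ)) :
    (PresentedGroup.of i * PresentedGroup.of j * PresentedGroup.of i : Braid N) =
      PresentedGroup.of j * PresentedGroup.of i * PresentedGroup.of j := by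
  have h := braid_mk_rel (N := N) (a := FreeGroup.of i * FreeGroup.of j * FreeGroup.of i)
    (b := FreeGroup.of j * FreeGroup.of i * FreeGroup.of j) ⟨i, j, Or.inl ⟨hij, rfl⟩⟩
  simpa [map_mul, PresentedGroup.of] using PresentedGroup.mk_eq_mk_of_mul_inv_mem
    (rels := braidRels N) (x := FreeGroup.of i * FreeGroup.of j * FreeGroup.of i)
    (y := FreeGroup.of j * FreeGroup.of i * FreeGroup.of j) ⟨i, j, Or.inl ⟨hij, rfl⟩⟩

theorem braid_comm {N : ℕ} {i j : Fin N} (hij : (i : ℕ) + 2 ≤ (j : ℕ)) :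
    (PresentedGroup.of i * PresentedGroup.of j : Braid N) =
      PresentedGroup.of j * PresentedGroup.of i := by
  have h := braid_mk_rel (N := N) (a := FreeGroup.of i * FreeGroup.of j)
    (b := FreeGroup.of j * FreeGroup.of i) ⟨i, j, Or.inr ⟨hij, rfl⟩⟩
  simpa [map_mul, PresentedGroup.of] using PresentedGroup.mk_eq_mk_of_mul_inv_mem
    (rels := braidRels N) (x := FreeGroup.of i * FreeGroup.of j)
    (y := FreeGroup.of j * FreeGroup.of i) ⟨i, j, Or.inr ⟨hij, rfl⟩⟩

open scoped Classical in
/-- The Matsumoto section `π ↦ c_π`: the braid group element obtained as the product of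
generators along a reduced decomposition of `π` (this is independent of the chosen
reduced decomposition). -/
noncomputable def mats (N : ℕ) (π : Equiv.Perm (Fin (N + 1))) : Braid N :=
  if h : ∃ l : List ℕ, IsReduced (N + 1) l π then bword N h.choose else 1

/-- `c_π` viewed in the group algebra `k[B_{N+1}]`. -/
noncomputable def cOf (𝕜 : Type*) [Field 𝕜] (N : ℕ) (π : Equiv.Perm (Fin (N + 1))) :
    MonoidAlgebra 𝕜 (Braid N) := MonoidAlgebra.of 𝕜 (Braid N) (mats N π)

/-- The braided symmetrizer `S_{N+1} = Σ_{π ∈ S_{N+1}} c_π ∈ k[B_{N+1}]`. -/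
noncomputable def symEl (𝕜 : Type*) [Field 𝕜] (N : ℕ) : MonoidAlgebra 𝕜 (Braid N) :=
  ∑ π : Equiv.Perm (Fin (N + 1)), cOf 𝕜 N π

open scoped Classical in
/-- `g_{n,j} = Σ_{π ∈ S̃_{n,j}} c_{π⁻¹} ∈ k[B_{n+1}]`, with `g_{n,j} = 0` for `j > n`. -/
noncomputable def gEl (𝕜 : Type*) [Field 𝕜] (n j : ℕ) : MonoidAlgebra 𝕜 (Braid n) :=
  if j ≤ n then
    ∑ π : Equiv.Perm (Fin (n + 1)), if StildeP n j π then cOf 𝕜 n π⁻¹ else 0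
  else 0

/-- The shift homomorphism `B_{N+1} → B_{M+1}`, `c_j ↦ c_{j+off}`. -/
noncomputable def shiftHom (N M off : ℕ) (h : N + off ≤ M) : Braid N →* Braid M :=
  PresentedGroup.toGroup
    (f := fun i : Fin N =>
      PresentedGroup.of (⟨(i : ℕ) + off, by have := i.isLt; omega⟩ : Fin M))
    (by
      rintro r ⟨i, j, hr⟩
      rcases hr with ⟨hij, rfl⟩ | ⟨hij, rfl⟩ <;>
        simp only [map_mul, map_inv, FreeGroup.lift_apply_of, mul_inv_eq_one]
      · exact braid_braid (show (i : ℕ) + off + 1 = (j : ℕ) + off by omega)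
      · exact braid_comm (show (i : ℕ) + off + 2 ≤ (j : ℕ) + off by omega))

end Stmt
namespace Stmt

/-- Membership of `σ ∈ S_{j,n−j} ⊆ S_n ⊆ S_{n+1}`: `σ` fixes the last point and is a
`j`-shuffle of `S_n`, i.e. `σ(1) < ⋯ < σ(j)` and `σ(j+1) < ⋯ < σ(n)` (0-based). -/
def ShufEmbP (n j : ℕ) (σ : Equiv.Perm (Fin (n + 1))) : Prop :=
  σ (Fin.last n) = Fin.last n ∧
  (∀ a b : Fin (n + 1), a < b → (b : ℕ) < j → σ a < σ b) ∧
  (∀ a b : Fin (n + 1), j ≤ (a : ℕ) → a < b → (b : ℕ) < n → σ a < σ b)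

open scoped Classical in
/-- The shuffle sum `S_{j,n−j} = Σ_{σ ∈ S_{j,n−j} ⊆ S_n} c_{σ⁻¹} ∈ k[B_{n+1}]`. -/
noncomputable def shufSumEmb (𝕜 : Type*) [Field 𝕜] (n j : ℕ) :
    MonoidAlgebra 𝕜 (Braid n) :=
  ∑ π : Equiv.Perm (Fin (n + 1)), if ShufEmbP n j π then cOf 𝕜 n π⁻¹ else 0

/-- The word (in 0-based generator indices) for
`ω_m = (c_{m−1})(c_{m−2} c_{m−1}) ⋯ (c_1 ⋯ c_{m−1}) ∈ B_m` (with `ω_1 = 1`). -/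
def omegaWord (m : ℕ) : List ℕ :=
  (List.range (m - 1)).flatMap (fun t => (List.range (t + 1)).map (fun r => m - 2 - t + r))

end Stmt

/-!
Let `ρ` reverse the positions `n - j, …, n`. Right multiplication by `ρ` maps the
`(n - j)`-shuffles of `S_n` bijectively onto `S̃_{n,j}`, and for such a shuffle `σ` the inversions
of `σ ρ` are those of `σ` together with all pairs inside the reversed block, so that
`ℓ((σ ρ)⁻¹) = ℓ(ρ) + ℓ(σ⁻¹)`. By Matsumoto's theorem (any two reduced words of a permutation give
the same braid), `π ↦ c_π` is multiplicative on length-additive products, whence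
`c_{(σ ρ)⁻¹} = c_ρ c_{σ⁻¹}`. Finally `c_ρ = shift_{n-j}(ω_{j+1})`, because the shifted word of
`ω_{j+1}` represents `ρ` and has length `ℓ(ρ) = (j + 1).choose 2`.
-/

namespace Stmt

open Finset

section Inversions

variable {m : ℕ}

def inversions (π : Equiv.Perm (Fin m)) : Finset (Fin m × Fin m) :=
  {p | p.1 < p.2 ∧ π p.2 < π p.1}

def numInversions (π : Equiv.Perm (Fin m)) : ℕ := #(inversions π)

lemma mem_inversions {π : Equiv.Perm (Fin m)} {p : Fin m × Fin m} :
    p ∈ inversions π ↔ p.1 < p.2 ∧ π p.2 < π p.1 := by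
  simp [inversions]

lemma numInversions_one : numInversions (1 : Equiv.Perm (Fin m)) = 0 := by
  simp only [numInversions, card_eq_zero, eq_empty_iff_forall_notMem, mem_inversions]
  exact fun p h => lt_asymm h.1 h.2

lemma numInversions_inv (π : Equiv.Perm (Fin m)) : numInversions π⁻¹ = numInversions π :=
  card_nbij' (fun p => (π⁻¹ p.2, π⁻¹ p.1)) (fun p => (π p.2, π p.1))
    (fun p hp => by simp_all [mem_inversions])
    (fun p hp => by simp_all [mem_inversions])
    (fun p _ => by simp) (fun p _ => by simp)

lemma sNat_apply_val {i : ℕ} (h : i + 1 < m) (x : Fin m) :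
    (sNat m i x : ℕ) = if (x : ℕ) = i then i + 1 else if (x : ℕ) = i + 1 then i else x := by
  rw [sNat, dif_pos h, Equiv.swap_apply_def]
  split_ifs <;> simp_all [Fin.ext_iff]

lemma sNat_of_not_lt {i : ℕ} (h : ¬ i + 1 < m) : sNat m i = 1 := dif_neg h

@[simp]
lemma sNat_mul_self (i : ℕ) : sNat m i * sNat m i = 1 := by
  unfold sNat
  split_ifs
  exacts [Equiv.swap_mul_self _ _, mul_one 1]

lemma sNat_symm (i : ℕ) : (sNat m i).symm = sNat m i :=
  inv_eq_of_mul_eq_one_right (sNat_mul_self i)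

@[simp]
lemma sNat_mul_sNat_mul (i : ℕ) (π : Equiv.Perm (Fin m)) : sNat m i * (sNat m i * π) = π := by
  rw [← mul_assoc, sNat_mul_self, one_mul]

@[simp]
lemma mul_sNat_mul_sNat (π : Equiv.Perm (Fin m)) (i : ℕ) : π * sNat m i * sNat m i = π := by
  rw [mul_assoc, sNat_mul_self, mul_one]

lemma sNat_apply_left {i : ℕ} (h : i + 1 < m) : sNat m i ⟨i, by omega⟩ = ⟨i + 1, h⟩ := by
  ext; simp [sNat_apply_val h]

lemma sNat_apply_right {i : ℕ} (h : i + 1 < m) : sNat m i ⟨i + 1, h⟩ = ⟨i, by omega⟩ := by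
  ext; simp [sNat_apply_val h]

lemma sNat_apply_of_ne {i : ℕ} (x : Fin m) (h₁ : (x : ℕ) ≠ i) (h₂ : (x : ℕ) ≠ i + 1) :
    sNat m i x = x := by
  by_cases h : i + 1 < m
  · ext; simp [sNat_apply_val h, h₁, h₂]
  · rw [sNat_of_not_lt h, Equiv.Perm.one_apply]

lemma sNat_comm {i j : ℕ} (hij : i + 2 ≤ j) : sNat m i * sNat m j = sNat m j * sNat m i := by
  by_cases hj : j + 1 < m
  · ext x
    simp only [Equiv.Perm.mul_apply, sNat_apply_val (show i + 1 < m by omega), sNat_apply_val hj]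
    split_ifs <;> omega
  · rw [sNat_of_not_lt hj, one_mul, mul_one]

lemma sNat_braid {i : ℕ} (h : i + 2 < m) :
    sNat m i * sNat m (i + 1) * sNat m i = sNat m (i + 1) * sNat m i * sNat m (i + 1) := by
  ext x
  simp only [Equiv.Perm.mul_apply, sNat_apply_val (show i + 1 < m by omega), sNat_apply_val h]
  split_ifs <;> omega

lemma toPerm_cons (i : ℕ) (l : List ℕ) : toPerm m (i :: l) = sNat m i * toPerm m l := by
  simp [toPerm]

lemma toPerm_append (l₁ l₂ : List ℕ) : toPerm m (l₁ ++ l₂) = toPerm m l₁ * toPerm m l₂ := by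
  simp [toPerm]

lemma toPerm_concat (l : List ℕ) (i : ℕ) : toPerm m (l ++ [i]) = toPerm m l * sNat m i := by
  simp [toPerm]

lemma sNat_lt_sNat_iff {i : ℕ} (h : i + 1 < m) {x y : Fin m}
    (hxy : ¬ ((x : ℕ) = i ∧ (y : ℕ) = i + 1)) (hyx : ¬ ((y : ℕ) = i ∧ (x : ℕ) = i + 1)) :
    sNat m i x < sNat m i y ↔ x < y := by
  simp only [Fin.lt_def, sNat_apply_val h]
  split_ifs <;> omega

lemma numInversions_mul_sNat_of_lt {i : ℕ} (h : i + 1 < m) {π : Equiv.Perm (Fin m)}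
    (hπ : π ⟨i, by omega⟩ < π ⟨i + 1, h⟩) :
    numInversions (π * sNat m i) = numInversions π + 1 := by
  set e : Fin m × Fin m := (⟨i, by omega⟩, ⟨i + 1, h⟩)
  set φ := Equiv.prodCongr (sNat m i) (sNat m i)
  have hφ : ∀ q, φ.symm q = φ q := fun q => by simp [φ, sNat_symm]
  have key : inversions (π * sNat m i) = insert e ((inversions π).map φ.toEmbedding) := by
    ext q
    rw [mem_insert, mem_map_equiv, hφ, mem_inversions, mem_inversions]
    simp only [φ, Equiv.prodCongr_apply, Prod.map_fst, Prod.map_snd, Equiv.Perm.mul_apply]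
    by_cases hqe : q = e
    · subst hqe
      simp [e, sNat_apply_left h, sNat_apply_right h, hπ]
    by_cases hqe' : (q.1 : ℕ) = i + 1 ∧ (q.2 : ℕ) = i
    · have h₁ : q.1 = ⟨i + 1, h⟩ := Fin.ext hqe'.1
      have h₂ : q.2 = ⟨i, by omega⟩ := Fin.ext hqe'.2
      simp [h₁, h₂, sNat_apply_left h, sNat_apply_right h, hqe, hπ.le]
    have hne : ¬ ((q.1 : ℕ) = i ∧ (q.2 : ℕ) = i + 1) := fun hc =>
      hqe (Prod.ext (Fin.ext hc.1) (Fin.ext hc.2))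
    rw [sNat_lt_sNat_iff h hne (by tauto)]
    tauto
  have he : e ∉ (inversions π).map φ.toEmbedding := by
    rw [mem_map_equiv, hφ, mem_inversions]
    simp [φ, e, sNat_apply_left h, sNat_apply_right h]
  rw [numInversions, key, card_insert_of_notMem he, card_map, numInversions]

lemma numInversions_mul_sNat_of_gt {i : ℕ} (h : i + 1 < m) {π : Equiv.Perm (Fin m)}
    (hπ : π ⟨i + 1, h⟩ < π ⟨i, by omega⟩) :
    numInversions (π * sNat m i) + 1 = numInversions π := by
  have := numInversions_mul_sNat_of_lt h (π := π * sNat m i)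
    (by simpa [sNat_apply_left h, sNat_apply_right h])
  rwa [mul_sNat_mul_sNat, eq_comm] at this

lemma numInversions_mul_sNat_le (π : Equiv.Perm (Fin m)) (i : ℕ) :
    numInversions (π * sNat m i) ≤ numInversions π + 1 := by
  by_cases h : i + 1 < m
  · rcases lt_or_gt_of_ne (π.injective.ne (a₁ := ⟨i, by omega⟩) (a₂ := ⟨i + 1, h⟩)
      (by simp [Fin.ext_iff])) with hlt | hgt
    · rw [numInversions_mul_sNat_of_lt h hlt]
    · have := numInversions_mul_sNat_of_gt h hgt
      omega
  · rw [sNat_of_not_lt h, mul_one]; omega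

lemma numInversions_toPerm_le (l : List ℕ) : numInversions (toPerm m l) ≤ l.length := by
  induction l using List.reverseRecOn with
  | nil => simp [toPerm, numInversions_one]
  | append_singleton l i ih =>
    rw [toPerm_concat, List.length_append, List.length_singleton]
    exact (numInversions_mul_sNat_le _ i).trans (by omega)

lemma exists_descent {π : Equiv.Perm (Fin m)} (hπ : π ≠ 1) :
    ∃ i, ∃ h : i + 1 < m, π ⟨i + 1, h⟩ < π ⟨i, by omega⟩ := by
  obtain _ | m := m
  · exact absurd (Subsingleton.elim π 1) hπ
  by_contra! hmono
  refine hπ (Equiv.ext fun x => StrictMono.apply_eq (f := π) ?_)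
  refine Fin.strictMono_iff_lt_succ.mpr fun i => (hmono i (by omega)).lt_of_ne ?_
  exact π.injective.ne (by simp [Fin.ext_iff])

lemma exists_toPerm_eq (π : Equiv.Perm (Fin m)) :
    ∃ l, toPerm m l = π ∧ l.length = numInversions π := by
  induction hN : numInversions π using Nat.strong_induction_on generalizing π with
  | _ N ih =>
    by_cases hπ : π = 1
    · exact ⟨[], by simp [hπ, toPerm], by simp [← hN, hπ, numInversions_one]⟩
    obtain ⟨i, h, hi⟩ := exists_descent hπ
    have hdrop := numInversions_mul_sNat_of_gt h hi
    obtain ⟨l, hl, hlen⟩ := ih _ (by omega) (π * sNat m i) rfl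
    exact ⟨l ++ [i], by rw [toPerm_concat, hl, mul_sNat_mul_sNat], by simp [hlen]; omega⟩

lemma isReduced_iff {l : List ℕ} {π : Equiv.Perm (Fin m)} :
    IsReduced m l π ↔ toPerm m l = π ∧ l.length = numInversions π := by
  refine ⟨fun ⟨hl, hmin⟩ => ⟨hl, le_antisymm ?_ (hl ▸ numInversions_toPerm_le l)⟩,
    fun ⟨hl, hlen⟩ => ⟨hl, fun l' hl' => hlen ▸ hl' ▸ numInversions_toPerm_le l'⟩⟩
  obtain ⟨l', hl', hlen'⟩ := exists_toPerm_eq π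
  exact hlen' ▸ hmin l' hl'

lemma exists_isReduced (π : Equiv.Perm (Fin m)) : ∃ l, IsReduced m l π :=
  (exists_toPerm_eq π).imp fun _ => isReduced_iff.mpr

lemma IsReduced.append {l₁ l₂ : List ℕ} {α β : Equiv.Perm (Fin m)}
    (h₁ : IsReduced m l₁ α) (h₂ : IsReduced m l₂ β)
    (h : numInversions (α * β) = numInversions α + numInversions β) :
    IsReduced m (l₁ ++ l₂) (α * β) := by
  rw [isReduced_iff] at h₁ h₂ ⊢
  rw [toPerm_append, h₁.1, h₂.1, List.length_append, h₁.2, h₂.2, h]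
  exact ⟨rfl, rfl⟩

lemma IsReduced.of_concat {l : List ℕ} {i : ℕ} {π : Equiv.Perm (Fin m)}
    (hred : IsReduced m (l ++ [i]) π) :
    ∃ h : i + 1 < m, π ⟨i + 1, h⟩ < π ⟨i, by omega⟩ ∧ IsReduced m l (π * sNat m i) := by
  obtain ⟨hl, hlen⟩ := isReduced_iff.mp hred
  rw [toPerm_concat] at hl
  replace hl : toPerm m l = π * sNat m i := by rw [← hl, mul_sNat_mul_sNat]
  have hle := hl ▸ numInversions_toPerm_le (m := m) l
  rw [List.length_append, List.length_singleton] at hlen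
  have hi : i + 1 < m := by
    by_contra hi
    rw [sNat_of_not_lt hi, mul_one] at hle
    omega
  have hdesc : π ⟨i + 1, hi⟩ < π ⟨i, by omega⟩ := by
    refine (lt_or_gt_of_ne (π.injective.ne (by simp [Fin.ext_iff]))).resolve_right fun hasc => ?_
    rw [numInversions_mul_sNat_of_lt hi hasc] at hle
    omega
  have := numInversions_mul_sNat_of_gt hi hdesc
  exact ⟨hi, hdesc, isReduced_iff.mpr ⟨hl, by omega⟩⟩

lemma numInversions_mul_sNat_mul_sNat {i j : ℕ} (hij : i + 2 ≤ j) (hj : j + 1 < m)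
    {π : Equiv.Perm (Fin m)} (hπi : π ⟨i + 1, by omega⟩ < π ⟨i, by omega⟩)
    (hπj : π ⟨j + 1, hj⟩ < π ⟨j, by omega⟩) :
    numInversions (π * sNat m i * sNat m j) + 2 = numInversions π := by
  have hi := numInversions_mul_sNat_of_gt (by omega) hπi
  have hj := numInversions_mul_sNat_of_gt hj (π := π * sNat m i) (by
    rwa [Equiv.Perm.mul_apply, Equiv.Perm.mul_apply, sNat_apply_of_ne _ (by simp; omega)
      (by simp; omega), sNat_apply_of_ne _ (by simp; omega) (by simp; omega)])
  omega

lemma numInversions_mul_sNat_mul_sNat_mul_sNat {i : ℕ} (h : i + 2 < m) {π : Equiv.Perm (Fin m)}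
    (hπi : π ⟨i + 1, by omega⟩ < π ⟨i, by omega⟩)
    (hπj : π ⟨i + 1 + 1, h⟩ < π ⟨i + 1, by omega⟩) :
    numInversions (π * sNat m i * sNat m (i + 1) * sNat m i) + 3 = numInversions π := by
  have hi : i + 1 < m := by omega
  have hfix : sNat m i ⟨i + 1 + 1, h⟩ = ⟨i + 1 + 1, h⟩ :=
    sNat_apply_of_ne _ (by simp; omega) (by simp)
  have hfix' : sNat m (i + 1) ⟨i, by omega⟩ = ⟨i, by omega⟩ :=
    sNat_apply_of_ne _ (by simp) (by simp; omega)
  have h₁ := numInversions_mul_sNat_of_gt hi hπi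
  have h₂ := numInversions_mul_sNat_of_gt h (π := π * sNat m i) (by
    simpa [hfix, sNat_apply_right hi] using hπj.trans hπi)
  have h₃ := numInversions_mul_sNat_of_gt hi (π := π * sNat m i * sNat m (i + 1)) (by
    simpa [hfix, hfix', sNat_apply_left hi, sNat_apply_left h] using hπj)
  omega

end Inversions

section Matsumoto

variable {n : ℕ}

lemma bgen_of_lt {i : ℕ} (h : i < n) : bgen n i = PresentedGroup.of (⟨i, h⟩ : Fin n) := dif_pos h

lemma bword_append (l₁ l₂ : List ℕ) : bword n (l₁ ++ l₂) = bword n l₁ * bword n l₂ := by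
  simp [bword]

lemma bword_comm {i j : ℕ} (hj : j < n) (hij : i + 2 ≤ j) : bword n [i, j] = bword n [j, i] := by
  simpa [bword, bgen_of_lt (by omega : i < n), bgen_of_lt hj] using braid_comm hij

lemma bword_braid {i : ℕ} (h : i + 1 < n) :
    bword n [i, i + 1, i] = bword n [i + 1, i, i + 1] := by
  simpa [bword, bgen_of_lt (by omega : i < n), bgen_of_lt h, mul_assoc] using braid_braid rfl

def ReducedWordsAgreeBelow (π : Equiv.Perm (Fin (n + 1))) : Prop :=
  ∀ ρ : Equiv.Perm (Fin (n + 1)), numInversions ρ < numInversions π → ∀ l₁ l₂,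
    IsReduced (n + 1) l₁ ρ → IsReduced (n + 1) l₂ ρ → bword n l₁ = bword n l₂

variable {π : Equiv.Perm (Fin (n + 1))} {t₁ t₂ : List ℕ}

-- Matsumoto's exchange step: when `σ * toPerm (u ++ [i]) = π` adds lengths, the induction
-- hypothesis lets a reduced word of `π` ending in `i` be replaced by `r ++ u ++ [i]`. For two
-- descents `i` and `j`, `u ++ [i]` and `v ++ [j]` are the two reduced words of the longest
-- element of `⟨s_i, s_j⟩`.
lemma bword_concat_eq_of_isReduced {σ : Equiv.Perm (Fin (n + 1))} {r u : List ℕ} {i : ℕ}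
    (ih : ReducedWordsAgreeBelow π) (ht : IsReduced (n + 1) (t₁ ++ [i]) π)
    (hr : IsReduced (n + 1) r σ) (hu : σ * toPerm (n + 1) (u ++ [i]) = π)
    (hlen : numInversions σ + u.length + 1 = numInversions π) :
    bword n (t₁ ++ [i]) = bword n r * bword n (u ++ [i]) := by
  obtain ⟨hrσ, hrlen⟩ := isReduced_iff.mp hr
  have hru : IsReduced (n + 1) (r ++ u ++ [i]) π := isReduced_iff.mpr
    ⟨by rw [List.append_assoc, toPerm_append, hrσ, hu], by simp [hrlen, ← hlen]; omega⟩
  obtain ⟨-, -, ht'⟩ := ht.of_concat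
  obtain ⟨hi, hdesc, hru'⟩ := hru.of_concat
  have := numInversions_mul_sNat_of_gt hi hdesc
  rw [bword_append, ih _ (by omega) t₁ (r ++ u) ht' hru', bword_append, bword_append, mul_assoc]

lemma bword_concat_eq_of_eq {i : ℕ} (ih : ReducedWordsAgreeBelow π)
    (h₁ : IsReduced (n + 1) (t₁ ++ [i]) π) (h₂ : IsReduced (n + 1) (t₂ ++ [i]) π) :
    bword n (t₁ ++ [i]) = bword n (t₂ ++ [i]) := by
  obtain ⟨hi, hπi, ht₁⟩ := h₁.of_concat
  obtain ⟨-, -, ht₂⟩ := h₂.of_concat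
  have := numInversions_mul_sNat_of_gt hi hπi
  rw [bword_append, bword_append, ih _ (by omega) t₁ t₂ ht₁ ht₂]

lemma bword_concat_eq_of_le {i j : ℕ} (hij : i + 2 ≤ j) (ih : ReducedWordsAgreeBelow π)
    (h₁ : IsReduced (n + 1) (t₁ ++ [i]) π) (h₂ : IsReduced (n + 1) (t₂ ++ [j]) π) :
    bword n (t₁ ++ [i]) = bword n (t₂ ++ [j]) := by
  obtain ⟨_, hπi, -⟩ := h₁.of_concat
  obtain ⟨hj, hπj, -⟩ := h₂.of_concat
  obtain ⟨r, hr⟩ := exists_isReduced (π * sNat (n + 1) i * sNat (n + 1) j)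
  have hdrop := numInversions_mul_sNat_mul_sNat hij hj hπi hπj
  rw [bword_concat_eq_of_isReduced ih h₁ hr (u := [j]) (by simp [toPerm, mul_assoc])
      (by simp; omega),
    bword_concat_eq_of_isReduced ih h₂ hr (u := [i]) (by simp [toPerm, ← mul_assoc, sNat_comm hij])
      (by simp; omega)]
  exact congrArg _ (bword_comm (by omega) hij).symm

lemma bword_concat_eq_of_succ {i : ℕ} (ih : ReducedWordsAgreeBelow π)
    (h₁ : IsReduced (n + 1) (t₁ ++ [i]) π) (h₂ : IsReduced (n + 1) (t₂ ++ [i + 1]) π) :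
    bword n (t₁ ++ [i]) = bword n (t₂ ++ [i + 1]) := by
  obtain ⟨_, hπi, -⟩ := h₁.of_concat
  obtain ⟨hj, hπj, -⟩ := h₂.of_concat
  obtain ⟨r, hr⟩ := exists_isReduced (π * sNat (n + 1) i * sNat (n + 1) (i + 1) * sNat (n + 1) i)
  have hdrop := numInversions_mul_sNat_mul_sNat_mul_sNat hj hπi hπj
  have hbraid := sNat_braid hj
  simp only [mul_assoc] at hbraid
  rw [bword_concat_eq_of_isReduced ih h₁ hr (u := [i, i + 1]) (by simp [toPerm, mul_assoc])
      (by simp; omega),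
    bword_concat_eq_of_isReduced ih h₂ hr (u := [i + 1, i]) (by simp [toPerm, mul_assoc, hbraid])
      (by simp; omega)]
  exact congrArg _ (bword_braid (by omega))

theorem bword_eq_of_isReduced {l₁ l₂ : List ℕ} (h₁ : IsReduced (n + 1) l₁ π)
    (h₂ : IsReduced (n + 1) l₂ π) : bword n l₁ = bword n l₂ := by
  induction hN : numInversions π using Nat.strong_induction_on generalizing π l₁ l₂ with
  | _ N ih =>
  have ih : ReducedWordsAgreeBelow π := fun ρ hρ _ _ h₁ h₂ => ih _ (hN ▸ hρ) h₁ h₂ rfl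
  have hlen : l₁.length = l₂.length := (isReduced_iff.mp h₁).2.trans (isReduced_iff.mp h₂).2.symm
  rcases l₁.eq_nil_or_concat' with rfl | ⟨t₁, i, rfl⟩
  · rw [List.eq_nil_of_length_eq_zero hlen.symm]
  rcases l₂.eq_nil_or_concat' with rfl | ⟨t₂, j, rfl⟩
  · simp at hlen
  wlog hij : i ≤ j generalizing t₁ t₂ i j
  · exact (this t₂ j h₂ t₁ i h₁ hlen.symm (by omega)).symm
  rcases (show i = j ∨ i + 2 ≤ j ∨ j = i + 1 by omega) with rfl | hij | rfl
  · exact bword_concat_eq_of_eq ih h₁ h₂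
  · exact bword_concat_eq_of_le hij ih h₁ h₂
  · exact bword_concat_eq_of_succ ih h₁ h₂

lemma mats_eq_bword {π : Equiv.Perm (Fin (n + 1))} {l : List ℕ} (hl : IsReduced (n + 1) l π) :
    mats n π = bword n l := by
  have hex : ∃ l, IsReduced (n + 1) l π := ⟨l, hl⟩
  rw [mats, dif_pos hex]
  exact bword_eq_of_isReduced hex.choose_spec hl

lemma mats_mul {α β : Equiv.Perm (Fin (n + 1))}
    (h : numInversions (α * β) = numInversions α + numInversions β) :
    mats n (α * β) = mats n α * mats n β := by
  obtain ⟨l₁, h₁⟩ := exists_isReduced α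
  obtain ⟨l₂, h₂⟩ := exists_isReduced β
  rw [mats_eq_bword h₁, mats_eq_bword h₂, mats_eq_bword (h₁.append h₂ h), bword_append]

end Matsumoto

section BlockReversal

variable {m : ℕ}

def blockRev (m k : ℕ) : Equiv.Perm (Fin m) :=
  Function.Involutive.toPerm
    (fun x => if h : (x : ℕ) < k then x else ⟨k + (m - 1) - x, by omega⟩)
    (fun x => Fin.ext (by beta_reduce; split_ifs <;> simp only at * <;> omega))

lemma blockRev_apply_val (k : ℕ) (x : Fin m) :
    (blockRev m k x : ℕ) = if (x : ℕ) < k then (x : ℕ) else k + (m - 1) - x := by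
  change ((if h : (x : ℕ) < k then x else ⟨k + (m - 1) - x, by omega⟩ : Fin m) : ℕ) = _
  split_ifs <;> rfl

@[simp]
lemma blockRev_symm (k : ℕ) : (blockRev m k).symm = blockRev m k :=
  Function.Involutive.toPerm_symm _

@[simp]
lemma blockRev_inv (k : ℕ) : (blockRev m k)⁻¹ = blockRev m k := blockRev_symm k

@[simp]
lemma blockRev_apply_blockRev (k : ℕ) (x : Fin m) : blockRev m k (blockRev m k x) = x :=
  Function.Involutive.toPerm_involutive _ x

def tailPairs (m k : ℕ) : Finset (Fin m × Fin m) :=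
  let tail : Finset (Fin m) := {x | k ≤ (x : ℕ)}
  {p ∈ tail ×ˢ tail | p.1 < p.2}

lemma mem_tailPairs {k : ℕ} {p : Fin m × Fin m} :
    p ∈ tailPairs m k ↔ k ≤ (p.1 : ℕ) ∧ p.1 < p.2 := by
  simp only [tailPairs, mem_filter, mem_product, mem_univ, true_and, Fin.lt_def]
  constructor
  · exact fun ⟨⟨h, _⟩, hlt⟩ => ⟨h, hlt⟩
  · exact fun ⟨h, hlt⟩ => ⟨⟨h, by omega⟩, hlt⟩

lemma card_tailPairs (k : ℕ) : #(tailPairs m k) = (m - k).choose 2 := by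
  rw [tailPairs, card_product_filter_lt]
  congr
  have := card_filter_add_card_filter_not (s := univ) (fun x : Fin m => (x : ℕ) < k)
  simp only [Fin.card_filter_val_lt, card_univ, Fintype.card_fin, not_lt] at this
  omega

-- The pairs inside the reversed block are all inversions of `σ * blockRev m k`; the other
-- inversions correspond to those of `σ` under `blockRev m k × blockRev m k`.
lemma numInversions_mul_blockRev {k : ℕ} {σ : Equiv.Perm (Fin m)}
    (hσ : ∀ a b : Fin m, k ≤ (a : ℕ) → a < b → σ a < σ b) :
    numInversions (σ * blockRev m k) = numInversions σ + (m - k).choose 2 := by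
  set ρ := blockRev m k
  have hρ := blockRev_apply_val (m := m) k
  have htail : {q ∈ inversions (σ * ρ) | k ≤ (q.1 : ℕ)} = tailPairs m k := by
    ext q
    simp only [mem_filter, mem_inversions, mem_tailPairs, Equiv.Perm.mul_apply]
    refine ⟨fun ⟨⟨hlt, _⟩, hk⟩ => ⟨hk, hlt⟩, fun ⟨hk, hlt⟩ => ⟨⟨hlt, hσ _ _ ?_ ?_⟩, hk⟩⟩
    · rw [hρ]; split_ifs <;> omega
    · rw [Fin.lt_def, hρ, hρ] at *; split_ifs <;> omega
  have hhead : {q ∈ inversions (σ * ρ) | ¬ k ≤ (q.1 : ℕ)} =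
      (inversions σ).map (Equiv.prodCongr ρ ρ).toEmbedding := by
    ext q
    simp only [mem_filter, mem_map_equiv, Equiv.prodCongr_symm, blockRev_symm, ρ,
      Equiv.prodCongr_apply, Prod.map_fst, Prod.map_snd, mem_inversions, Equiv.Perm.mul_apply]
    refine ⟨fun ⟨⟨hlt, hinv⟩, hk⟩ => ⟨?_, hinv⟩, fun ⟨hlt, hinv⟩ => ?_⟩
    · rw [Fin.lt_def, hρ, hρ] at *; split_ifs <;> omega
    · have hk : ¬ k ≤ (q.1 : ℕ) := fun hk =>
        (hσ _ _ (by rw [hρ]; split_ifs <;> omega) hlt).asymm hinv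
      refine ⟨⟨?_, hinv⟩, hk⟩
      rw [Fin.lt_def, hρ, hρ] at *; split_ifs at * <;> omega
  rw [numInversions, ← card_filter_add_card_filter_not (fun q => k ≤ (q.1 : ℕ)), htail, hhead,
    card_map, card_tailPairs, numInversions, add_comm]

lemma numInversions_blockRev (k : ℕ) : numInversions (blockRev m k) = (m - k).choose 2 := by
  simpa [numInversions_one] using numInversions_mul_blockRev (σ := 1) (fun _ _ _ h => h)

end BlockReversal

section ReversalWord

variable {n : ℕ}

def revWord (n j : ℕ) : List ℕ :=
  (List.range j).flatMap fun t => (List.range (t + 1)).map (n - 1 - t + ·)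

lemma revWord_succ (j : ℕ) :
    revWord n (j + 1) = revWord n j ++ (List.range (j + 1)).map (n - 1 - j + ·) := by
  simp [revWord, List.range_succ, List.flatMap_append]

lemma length_revWord (j : ℕ) : (revWord n j).length = (j + 1).choose 2 := by
  induction j with
  | zero => rfl
  | succ j ih =>
    rw [revWord_succ, List.length_append, ih, List.length_map, List.length_range,
      Nat.choose_succ_succ' (j + 1), Nat.choose_one_right, add_comm]

lemma toPerm_map_range_apply_val {d : ℕ} (hd : d ≤ n) (x : Fin (n + 1)) :
    (toPerm (n + 1) ((List.range d).map (n - d + ·)) x : ℕ) =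
      if (x : ℕ) < n - d then (x : ℕ) else if (x : ℕ) = n then n - d else (x : ℕ) + 1 := by
  induction d with
  | zero =>
    have := x.isLt
    simp only [List.range_zero, List.map_nil, toPerm, List.prod_nil, Equiv.Perm.one_apply]
    split_ifs <;> omega
  | succ d ih =>
    have hblock : (List.range (d + 1)).map (n - (d + 1) + ·) =
        (n - (d + 1)) :: (List.range d).map (n - d + ·) := by
      rw [List.range_succ_eq_map, List.map_cons, List.map_map]
      congr 1
      exact List.map_congr_left fun r _ => by simp only [Function.comp_apply]; omega
    rw [hblock, toPerm_cons, Equiv.Perm.mul_apply, sNat_apply_val (by omega), ih (by omega)]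
    split_ifs <;> omega

lemma toPerm_revWord {j : ℕ} (hj : j ≤ n) :
    toPerm (n + 1) (revWord n j) = blockRev (n + 1) (n - j) := by
  induction j with
  | zero => ext x; simp [revWord, toPerm, blockRev_apply_val]; omega
  | succ j ih =>
    rw [revWord_succ, toPerm_append, ih (by omega), show n - 1 - j = n - (j + 1) by omega]
    ext x
    have := (toPerm (n + 1) ((List.range (j + 1)).map (n - (j + 1) + ·)) x).isLt
    rw [Equiv.Perm.mul_apply, blockRev_apply_val, blockRev_apply_val, toPerm_map_range_apply_val hj]
    split_ifs at * <;> omega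

lemma lt_of_mem_omegaWord {j x : ℕ} (hx : x ∈ omegaWord (j + 1)) : x < j := by
  simp only [omegaWord, List.mem_flatMap, List.mem_map, List.mem_range] at hx
  omega

lemma omegaWord_map_add {j : ℕ} (hj : j ≤ n) :
    (omegaWord (j + 1)).map (· + (n - j)) = revWord n j := by
  simp only [omegaWord, revWord, List.map_flatMap, List.map_map, Nat.add_sub_cancel]
  refine List.flatMap_congr fun t ht => List.map_congr_left fun r hr => ?_
  simp only [List.mem_range] at ht hr
  simp only [Function.comp_apply]
  omega

end ReversalWord

section Shift

lemma shiftHom_bgen {N M off : ℕ} (h : N + off ≤ M) {i : ℕ} (hi : i < N) :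
    shiftHom N M off h (bgen N i) = bgen M (i + off) := by
  rw [bgen_of_lt hi, shiftHom, PresentedGroup.toGroup.of, bgen_of_lt (by omega)]

lemma shiftHom_bword {N M off : ℕ} (h : N + off ≤ M) {l : List ℕ} (hl : ∀ x ∈ l, x < N) :
    shiftHom N M off h (bword N l) = bword M (l.map (· + off)) := by
  rw [bword, map_list_prod, List.map_map, bword, List.map_map]
  exact congrArg List.prod (List.map_congr_left fun x hx => shiftHom_bgen h (hl x hx))

lemma shiftHom_bword_omegaWord {n j : ℕ} (hj : j ≤ n) (h : j + (n - j) ≤ n) :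
    shiftHom j n (n - j) h (bword j (omegaWord (j + 1))) = mats n (blockRev (n + 1) (n - j)) := by
  rw [shiftHom_bword h fun _ => lt_of_mem_omegaWord, omegaWord_map_add hj, mats_eq_bword]
  rw [isReduced_iff, toPerm_revWord hj, length_revWord, numInversions_blockRev,
    show n + 1 - (n - j) = j + 1 by omega]
  exact ⟨rfl, rfl⟩

end Shift

section Shuffles

variable {n j : ℕ}

lemma ShufEmbP.apply_lt_apply {k : ℕ} {σ : Equiv.Perm (Fin (n + 1))} (hσ : ShufEmbP n k σ)
    {a b : Fin (n + 1)} (ha : k ≤ (a : ℕ)) (hab : a < b) : σ a < σ b := by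
  rcases (Fin.le_last b).lt_or_eq with hb | rfl
  · exact hσ.2.2 a b ha hab hb
  · rw [hσ.1]
    exact (Fin.le_last _).lt_of_ne fun h => hab.ne (σ.injective (h.trans hσ.1.symm))

lemma stildeP_mul_blockRev_iff (σ : Equiv.Perm (Fin (n + 1))) :
    StildeP n j (σ * blockRev (n + 1) (n - j)) ↔ ShufEmbP n (n - j) σ := by
  set ρ := blockRev (n + 1) (n - j)
  have hρ := blockRev_apply_val (m := n + 1) (n - j)
  have hfix : ∀ x : Fin (n + 1), (x : ℕ) < n - j → ρ x = x :=
    fun x hx => Fin.ext (by rw [hρ, if_pos hx])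
  have hmid : ρ ⟨n - j, by omega⟩ = Fin.last n := Fin.ext (by rw [hρ]; simp)
  simp only [StildeP, ShufEmbP, Equiv.Perm.mul_apply, hmid]
  refine ⟨fun ⟨hA, hB, hC⟩ => ⟨hB, fun a b hab hb => ?_, fun a b ha hab hb => ?_⟩,
    fun ⟨hB, hA, hC⟩ => ⟨fun a b hab hb => ?_, hB, fun a b ha hab => ?_⟩⟩
  · simpa [hfix a (by omega), hfix b hb] using hA a b hab hb
  · simpa [ρ] using hC (ρ b) (ρ a) (by rw [hρ]; split_ifs <;> omega)
      (by rw [Fin.lt_def, hρ, hρ] at *; split_ifs <;> omega)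
  · simpa [hfix a (by omega), hfix b hb] using hA a b hab hb
  · exact hC (ρ b) (ρ a) (by rw [hρ]; split_ifs <;> omega)
      (by rw [Fin.lt_def, hρ, hρ] at *; split_ifs <;> omega)
      (by rw [hρ]; split_ifs <;> omega)

lemma mats_inv_mul_blockRev {k : ℕ} {σ : Equiv.Perm (Fin (n + 1))} (hσ : ShufEmbP n k σ) :
    mats n (σ * blockRev (n + 1) k)⁻¹ = mats n (blockRev (n + 1) k) * mats n σ⁻¹ := by
  have h := numInversions_mul_blockRev fun a b => hσ.apply_lt_apply (a := a) (b := b)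
  rw [← numInversions_inv, mul_inv_rev, blockRev_inv] at h
  rw [mul_inv_rev, blockRev_inv]
  exact mats_mul (by rw [h, numInversions_inv, numInversions_blockRev, add_comm])

end Shuffles

/-- In `k[B_{n+1}]`, for `0 ≤ j ≤ n`:
`g_{n,j} = shift_{n−j}(ω_{j+1}) · S_{n−j,j}`, where `shift_{n−j} : k[B_{j+1}] → k[B_{n+1}]`
is induced by `c_i ↦ c_{i+n−j}`, `ω_{j+1}` is the longest-word lift, and `S_{n−j,j}` is
the sum of the Matsumoto lifts `c_{σ⁻¹}` over the `(n−j)`-shuffles `σ` of `S_n`. -/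
theorem gEl_eq_omega_mul_shuffles (𝕜 : Type*) [Field 𝕜] (n j : ℕ)
    (hj : j ≤ n) :
    gEl 𝕜 n j =
      MonoidAlgebra.of 𝕜 (Braid n)
          (shiftHom j n (n - j) (by omega) (bword j (omegaWord (j + 1)))) *
        shufSumEmb 𝕜 n (n - j) := by
  rw [shiftHom_bword_omegaWord hj, gEl, if_pos hj, shufSumEmb, mul_sum]
  refine (Fintype.sum_equiv (Equiv.mulRight (blockRev (n + 1) (n - j))) _ _ fun σ => ?_).symm
  rw [Equiv.coe_mulRight]
  split_ifs with hσ hσ' hσ'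
  · rw [cOf, cOf, mats_inv_mul_blockRev hσ, map_mul]
  · exact absurd ((stildeP_mul_blockRev_iff σ).mpr hσ) hσ'
  · exact absurd ((stildeP_mul_blockRev_iff σ).mp hσ') hσ
  · rw [mul_zero]

end Stmt
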